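/- arXiv:1009.1159 — 6 statements merged into one kernel-verified Lean document; each statement's English description precedes it below -/
import Mathlib

section
/- Let L be a commutative ring equipped with an action of a group Σ' by ring automorphisms such that L has no proper nonzero Σ'-stable ideals (L is Σ'-simple). Let K ⊆ L be a Σ'-stable subring that is absolutely flat (von Neumann regular). Then K itself is Σ'-simple, i.e., K has no proper nonzero Σ'-stable ideals. -/
/-- A Σ'-simple ring: the only ideals stable under the group action are ⊥ and ⊤.
If `L` is Σ'-simple and `K ⊆ L` is a Σ'-stable absolutely flat (von Neumann regular)
subring, then `K` is Σ'-simple. -/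
theorem stmt0 {L G : Type*} [CommRing L] [Group G] (φ : G →* RingAut L)
    (hsimple : ∀ I : Ideal L, (∀ g : G, ∀ x ∈ I, φ g x ∈ I) → I = ⊥ ∨ I = ⊤)
    (K : Subring L) (hKstable : ∀ g : G, ∀ x ∈ K, φ g x ∈ K)
    (hreg : ∀ a : K, ∃ b : K, a * b * a = a) :
    ∀ J : Ideal K, (∀ g : G, ∀ x : K, x ∈ J → ∀ y : K, (y : L) = φ g x → y ∈ J) →
      J = ⊥ ∨ J = ⊤ := by
  intro J hJ
  -- The idempotent lemma: any finite subset of (the image of) J is absorbed by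
  -- a single idempotent of J.
  have key : ∀ T : Finset L, (↑T ⊆ (Subtype.val '' (J : Set K))) →
      ∃ e : K, e ∈ J ∧ e * e = e ∧ ∀ t ∈ T, t * (e : L) = t := by
    intro T
    classical
    induction T using Finset.induction_on with
    | empty => intro _; exact ⟨0, J.zero_mem, by ring, by simp⟩
    | @insert a T hanotin ih =>
      intro hsub
      have haJ : a ∈ Subtype.val '' (J : Set K) := hsub (Finset.mem_insert_self a T)
      obtain ⟨x, hxJ, rfl⟩ := haJ
      obtain ⟨e, heJ, hee, he⟩ := ih (fun t ht => hsub (Finset.mem_insert_of_mem ht))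
      obtain ⟨b, hb⟩ := hreg x
      have hfJ : x * b ∈ J := J.mul_mem_right b hxJ
      have hxf : x * (x * b) = x := by linear_combination hb
      have hff : (x * b) * (x * b) = x * b := by linear_combination b * hb
      refine ⟨e + x * b - e * (x * b), ?_, ?_, ?_⟩
      · exact J.sub_mem (J.add_mem heJ hfJ) (J.mul_mem_right _ heJ)
      · linear_combination (1 - 2 * (x * b) + (x * b) * (x * b)) * hee + (1 - e) * hff
      · intro t ht
        rcases Finset.mem_insert.mp ht with rfl | htT
        · have hK : x * (e + x * b - e * (x * b)) = x := by
            linear_combination (1 - e) * hxf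
          calc ((x : L)) * ((e + x * b - e * (x * b) : K) : L)
              = ((x * (e + x * b - e * (x * b)) : K) : L) := by push_cast; ring
            _ = (x : L) := by rw [hK]
        · have hte : t * (e : L) = t := he t htT
          push_cast
          calc t * ((e : L) + x * b - e * (x * b))
              = t * e + t * (x * b) - (t * e) * (x * b) := by ring
            _ = t := by rw [hte]; ring
  -- the ideal of L generated by J
  set I : Ideal L := Ideal.span (Subtype.val '' (J : Set K)) with hI
  have hIstab : ∀ g : G, ∀ x ∈ I, φ g x ∈ I := by
    intro g x hx
    have hle : I ≤ Ideal.comap ((φ g : L ≃+* L) : L →+* L) I := by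
      rw [hI, Ideal.span_le]
      rintro _ ⟨y, hy, rfl⟩
      have hyK : φ g (y : L) ∈ K := hKstable g _ y.2
      have hmem : (⟨φ g (y : L), hyK⟩ : K) ∈ J := hJ g y hy _ rfl
      simp only [SetLike.mem_coe, Ideal.mem_comap, RingEquiv.coe_toRingHom]
      exact Ideal.subset_span ⟨_, hmem, rfl⟩
    exact hle hx
  rcases hsimple I hIstab with hbot | htop
  · left
    ext x
    simp only [Ideal.mem_bot]
    constructor
    · intro hx
      have : (x : L) ∈ I := Ideal.subset_span ⟨x, hx, rfl⟩
      rw [hbot] at this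
      exact Subtype.ext (by simpa using this)
    · rintro rfl; exact J.zero_mem
  · right
    have h1 : (1 : L) ∈ I := htop ▸ Submodule.mem_top
    rw [hI] at h1
    obtain ⟨T, hTsub, hT1⟩ := Submodule.mem_span_finite_of_mem_span h1
    obtain ⟨e, heJ, -, he⟩ := key T hTsub
    have habs : ∀ z ∈ Ideal.span (↑T : Set L), z * (e : L) = z := by
      intro z hz
      refine Submodule.span_induction ?_ ?_ ?_ ?_ hz
      · exact fun t ht => he t ht
      · simp
      · intro u v _ _ hu hv; rw [add_mul, hu, hv]
      · intro r u _ hu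
        rw [smul_eq_mul, mul_assoc, hu]
    have he1 : (e : L) = 1 := by
      have := habs 1 hT1
      simpa using this
    have : e = (1 : K) := Subtype.ext (by simpa using he1)
    rw [Ideal.eq_top_iff_one]
    exact this ▸ heJ
end

section
/- Let L be an absolutely flat (von Neumann regular) commutative ring and H a set of ring automorphisms of L. Then the fixed subring L^H = {x ∈ L : σ(x) = x for all σ ∈ H} is absolutely flat. -/
/-- In a commutative ring, the weak (reflexive) quasi-inverse is unique. -/
lemma weak_inverse_unique {L : Type*} [CommRing L] {a c d : L}
    (hc1 : a * c * a = a) (hc2 : c * a * c = c)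
    (hd1 : a * d * a = a) (hd2 : d * a * d = d) : c = d := by
  have h1 : c = c * a * d := by
    calc c = c * a * c := hc2.symm
    _ = c * (a * d * a) * c := by rw [hd1]
    _ = (c * a * c) * (a * d) := by ring
    _ = c * (a * d) := by rw [hc2]
    _ = c * a * d := by ring
  have h2 : d = c * a * d := by
    calc d = d * a * d := hd2.symm
    _ = d * (a * c * a) * d := by rw [hc1]
    _ = (d * a * d) * (a * c) := by ring
    _ = d * (a * c) := by rw [hd2]
    _ = c * a * d := by ring
  exact h1.trans h2.symm

/-- The fixed subring of an absolutely flat (von Neumann regular) commutative ring under a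
set of ring automorphisms is absolutely flat: every `H`-fixed element `a` admits a quasi-inverse
`b` which is also `H`-fixed. -/
theorem stmt1 {L : Type*} [CommRing L] (H : Set (RingAut L))
    (hreg : ∀ a : L, ∃ b : L, a * b * a = a)
    (a : L) (ha : ∀ σ ∈ H, σ a = a) :
    ∃ b : L, (∀ σ ∈ H, σ b = b) ∧ a * b * a = a := by
  obtain ⟨b, hb⟩ := hreg a
  set c := b * a * b with hc
  have hc1 : a * c * a = a := by
    calc a * (b * a * b) * a = (a * b * a) * (b * a) := by ring
    _ = a * (b * a) := by rw [hb]
    _ = a * b * a := by ring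
    _ = a := hb
  have hc2 : c * a * c = c := by
    calc (b * a * b) * a * (b * a * b) = b * (a * b * a) * (b * a * b) := by ring
    _ = b * a * (b * a * b) := by rw [hb]
    _ = (b * a * b) * (a * b) := by ring
    _ = b * (a * b * a) * b := by ring
    _ = b * a * b := by rw [hb]
  refine ⟨c, fun σ hσ => ?_, hc1⟩
  have hσa := ha σ hσ
  have h1 : a * σ c * a = a := by
    have := congrArg σ hc1
    simpa [map_mul, hσa] using this
  have h2 : σ c * a * σ c = σ c := by
    have := congrArg σ hc2
    simpa [map_mul, hσa] using this
  exact weak_inverse_unique h1 h2 hc1 hc2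
end

section
/- Let L be a commutative ring with an automorphism group Σ acting so that L is Σ-simple, reduced, Noetherian, and zero-dimensional (Artinian). Then L is isomorphic as a ring to Fⁿ for a single field F, and Σ acts transitively on the set of indecomposable idempotents of L. -/
/-!
A `G`-stable ideal of `L` is `⊥` or `⊤`, so the intersection of the `G`-orbit of a maximal ideal
`I` is zero; since an Artinian ring has only finitely many maximal ideals, prime avoidance puts a
conjugate of `I` inside any other maximal ideal `J`, i.e. `G` permutes the maximal ideals
transitively. As `L` is reduced Artinian, it is the product of its residue fields, which are
therefore all isomorphic. An indecomposable idempotent is determined by any prime ideal not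
containing it (if `e`, `f` avoid `p`, then `ef ≠ 0` and `e = ef + e(1 - f)` forces `e = ef = f`),
so transitivity on maximal ideals gives transitivity on indecomposable idempotents.
-/

def IsIndecomposableIdempotent {R : Type*} [Semiring R] (e : R) : Prop :=
  IsIdempotentElem e ∧ e ≠ 0 ∧ ∀ u v : R, IsIdempotentElem u → IsIdempotentElem v →
    u ≠ 0 → v ≠ 0 → u * v = 0 → e ≠ u + v

namespace IsIndecomposableIdempotent

theorem map {R S : Type*} [Semiring R] [Semiring S] (σ : R ≃+* S) {e : R}
    (he : IsIndecomposableIdempotent e) : IsIndecomposableIdempotent (σ e) := by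
  refine ⟨he.1.map σ, (map_ne_zero_iff σ σ.injective).2 he.2.1,
    fun u v hu hv hu0 hv0 huv heuv => he.2.2 (σ.symm u) (σ.symm v) (hu.map σ.symm)
      (hv.map σ.symm) (by simpa using hu0) (by simpa using hv0) ?_ ?_⟩
  · rw [← map_mul, huv, map_zero]
  · rw [← map_add, ← heuv, σ.symm_apply_apply]

variable {R : Type*} [CommRing R] {e f : R}

theorem mul_eq_self_of_mul_ne_zero (he : IsIndecomposableIdempotent e) (hf : IsIdempotentElem f)
    (hef : e * f ≠ 0) : e * f = e := by
  by_contra hne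
  refine he.2.2 (e * f) (e * (1 - f)) (he.1.mul hf) (he.1.mul hf.one_sub) hef ?_ ?_ (by ring)
  · rwa [mul_sub, mul_one, sub_ne_zero, ne_comm]
  · calc e * f * (e * (1 - f)) = e * e * (f * (1 - f)) := by ring
      _ = 0 := by rw [hf.mul_one_sub_self, mul_zero]

theorem eq_of_notMem (he : IsIndecomposableIdempotent e) (hf : IsIndecomposableIdempotent f)
    {p : Ideal R} [p.IsPrime] (hep : e ∉ p) (hfp : f ∉ p) : e = f := by
  have hef : e * f ∉ p := Ideal.IsPrime.mul_notMem ‹_› hep hfp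
  have hef0 : e * f ≠ 0 := fun h => hef (h ▸ p.zero_mem)
  calc e = e * f := (he.mul_eq_self_of_mul_ne_zero hf.1 hef0).symm
    _ = f := by rw [mul_comm] at hef0 ⊢; exact hf.mul_eq_self_of_mul_ne_zero he.1 hef0

end IsIndecomposableIdempotent

theorem exists_comap_eq_of_isMaximal {L G : Type*} [CommRing L] [IsArtinianRing L] [Group G]
    (φ : G →* RingAut L)
    (hsimple : ∀ I : Ideal L, (∀ g : G, ∀ x ∈ I, φ g x ∈ I) → I = ⊥ ∨ I = ⊤)
    (I J : Ideal L) [I.IsMaximal] [J.IsMaximal] : ∃ g : G, I.comap (φ g) = J := by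
  classical
  set orbit := Set.range fun g : G => I.comap (φ g)
  have horbit : orbit.Finite := (IsArtinianRing.setOfPred_isMaximal_finite L).subset <| by
    rintro _ ⟨g, rfl⟩
    exact Ideal.comap_isMaximal_of_equiv (φ g)
  have hstable : ∀ g : G, ∀ x ∈ sInf orbit, φ g x ∈ sInf orbit := by
    simp only [orbit, sInf_range, Submodule.mem_iInf, Ideal.mem_comap]
    intro g x hx h
    simpa only [map_mul, RingAut.mul_apply] using hx (h * g)
  have hbot : sInf orbit = ⊥ := (hsimple _ hstable).resolve_right fun htop =>
    Ideal.IsMaximal.ne_top ‹I.IsMaximal› (top_le_iff.1 (htop ▸ sInf_le ⟨1, by ext; simp⟩))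
  have hle : horbit.toFinset.inf id ≤ J := by
    rw [Finset.inf_id_eq_sInf, horbit.coe_toFinset, hbot]
    exact bot_le
  obtain ⟨K, hK, hKJ⟩ := (Ideal.IsPrime.inf_le' inferInstance).1 hle
  obtain ⟨g, rfl⟩ := horbit.mem_toFinset.1 hK
  exact ⟨g, (Ideal.comap_isMaximal_of_equiv (φ g)).eq_of_le (Ideal.IsMaximal.ne_top ‹_›) hKJ⟩

theorem IsArtinianRing.nonempty_ringEquiv_fin_pi {L : Type*} [CommRing L] [IsReduced L]
    [IsArtinianRing L] (m : Ideal L)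
    (hm : ∀ M : MaximalSpectrum L, Nonempty ((L ⧸ M.asIdeal) ≃+* (L ⧸ m))) :
    Nonempty (L ≃+* (Fin (Nat.card (MaximalSpectrum L)) → L ⧸ m)) :=
  ⟨(equivPi L).toRingEquiv.trans <| (RingEquiv.piCongrRight fun M => (hm M).some).trans <|
    RingEquiv.piCongrLeft' _ (Finite.equivFin _)⟩

/-- A reduced Artinian (Noetherian zero-dimensional) commutative ring `L`, simple with
respect to a group `G` of automorphisms, is isomorphic to `Fⁿ` for a single field `F`
(realized as a quotient by a maximal ideal), and `G` acts transitively on the set of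
indecomposable idempotents of `L`. -/
theorem stmt5 {L G : Type*} [CommRing L] [Nontrivial L] [IsReduced L] [IsArtinianRing L]
    [Group G] (φ : G →* RingAut L)
    (hsimple : ∀ I : Ideal L, (∀ g : G, ∀ x ∈ I, φ g x ∈ I) → I = ⊥ ∨ I = ⊤) :
    (∃ (n : ℕ) (m : Ideal L), m.IsMaximal ∧ Nonempty (L ≃+* (Fin n → L ⧸ m))) ∧
    (∀ e f : L,
      (IsIdempotentElem e ∧ e ≠ 0 ∧ ∀ u v : L, IsIdempotentElem u → IsIdempotentElem v →
        u ≠ 0 → v ≠ 0 → u * v = 0 → e ≠ u + v) →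
      (IsIdempotentElem f ∧ f ≠ 0 ∧ ∀ u v : L, IsIdempotentElem u → IsIdempotentElem v →
        u ≠ 0 → v ≠ 0 → u * v = 0 → f ≠ u + v) →
      ∃ g : G, φ g e = f) := by
  refine ⟨?_, fun e f he hf => ?_⟩
  · obtain ⟨m, hm⟩ := Ideal.exists_maximal L
    refine ⟨_, m, hm, IsArtinianRing.nonempty_ringEquiv_fin_pi m fun M => ?_⟩
    obtain ⟨g, hg⟩ := exists_comap_eq_of_isMaximal φ hsimple M.asIdeal m
    exact ⟨Ideal.quotientEquiv _ _ (φ g).symm (by rw [← hg, ← Ideal.map_symm]; rfl)⟩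
  · obtain ⟨p, hp, -, hep⟩ :=
      Ideal.exists_le_prime_notMem_of_isIdempotentElem ⊥ e he.1 (by simpa using he.2.1)
    obtain ⟨q, hq, -, hfq⟩ :=
      Ideal.exists_le_prime_notMem_of_isIdempotentElem ⊥ f hf.1 (by simpa using hf.2.1)
    obtain ⟨g, hg⟩ := exists_comap_eq_of_isMaximal φ hsimple q p
    refine ⟨g, (IsIndecomposableIdempotent.map (φ g) he).eq_of_notMem hf ?_ hfq⟩
    rwa [← Ideal.mem_comap, hg]
end

section
/- Let A and B be commutative rings each equipped with an action of a group Σ by ring automorphisms, and φ : A → B a Σ-equivariant ring homomorphism. If q ⊆ B is a pseudoprime Σ-ideal (i.e., q is a maximal Σ-ideal among Σ-ideals disjoint from some multiplicatively closed set S ⊆ B), then φ⁻¹(q) is a pseudoprime Σ-ideal of A. -/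
/-- An ideal stable under the group action. -/
def IsSigmaIdeal {R G : Type*} [CommRing R] [Group G] (φ : G →* RingAut R)
    (I : Ideal R) : Prop :=
  ∀ g : G, ∀ x ∈ I, φ g x ∈ I

/-- A pseudoprime Σ-ideal: a Σ-ideal maximal among Σ-ideals disjoint from some
multiplicatively closed set. -/
def IsPseudoPrime {R G : Type*} [CommRing R] [Group G] (φ : G →* RingAut R)
    (I : Ideal R) : Prop :=
  IsSigmaIdeal φ I ∧ ∃ S : Submonoid R, Disjoint (I : Set R) (S : Set R) ∧
    ∀ J : Ideal R, IsSigmaIdeal φ J → Disjoint (J : Set R) (S : Set R) → I ≤ J → J = I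

lemma pseudo_iff {R G : Type*} [CommRing R] [Group G] (φ : G →* RingAut R)
    (I : Ideal R) : IsPseudoPrime φ I ↔
      ∃ P : Ideal R, P.IsPrime ∧ I = ⨅ g : G, P.comap ((φ g : R ≃+* R) : R →+* R) := by
  constructor
  · rintro ⟨hσ, S, hdisj, hmax⟩
    obtain ⟨P, hP, hIP, hPS⟩ := Ideal.exists_le_prime_disjoint I S hdisj
    refine ⟨P, hP, ?_⟩
    set J : Ideal R := ⨅ g : G, P.comap ((φ g : R ≃+* R) : R →+* R) with hJ
    have hJσ : IsSigmaIdeal φ J := by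
      intro g x hx
      simp only [hJ, Ideal.mem_iInf] at hx ⊢
      intro h
      have := hx (h * g)
      simpa [Ideal.mem_comap, map_mul] using this
    have hJP : J ≤ P := by
      intro x hx
      have := Ideal.mem_iInf.mp hx (1 : G)
      simpa using this
    have hIJ : I ≤ J := by
      intro x hx
      rw [Ideal.mem_iInf]
      intro g
      exact hIP (hσ g x hx)
    exact (hmax J hJσ (Set.disjoint_of_subset_left hJP hPS) hIJ).symm
  · rintro ⟨P, hP, rfl⟩
    set J : Ideal R := ⨅ g : G, P.comap ((φ g : R ≃+* R) : R →+* R) with hJ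
    have hJσ : IsSigmaIdeal φ J := by
      intro g x hx
      simp only [hJ, Ideal.mem_iInf] at hx ⊢
      intro h
      have := hx (h * g)
      simpa [Ideal.mem_comap, map_mul] using this
    have hJP : J ≤ P := by
      intro x hx
      have := Ideal.mem_iInf.mp hx (1 : G)
      simpa using this
    refine ⟨hJσ, P.primeCompl, ?_, ?_⟩
    · rw [Set.disjoint_left]
      intro x hx hx'
      exact hx' (hJP hx)
    · intro K hKσ hKdisj hJK
      refine le_antisymm ?_ hJK
      intro x hx
      rw [Ideal.mem_iInf]
      intro g
      have hKP : (K : Set R) ⊆ P := by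
        intro y hy
        by_contra hy'
        exact Set.disjoint_left.mp hKdisj hy hy'
      exact hKP (hKσ g x hx)

/-- The preimage of a pseudoprime ideal under a Σ-equivariant ring homomorphism is
pseudoprime. -/
theorem stmt6 {A B G : Type*} [CommRing A] [CommRing B] [Group G]
    (φA : G →* RingAut A) (φB : G →* RingAut B)
    (f : A →+* B) (hequiv : ∀ g : G, ∀ a : A, f (φA g a) = φB g (f a))
    (q : Ideal B) (hq : IsPseudoPrime φB q) :
    IsPseudoPrime φA (q.comap f) := by
  rw [pseudo_iff] at hq ⊢
  obtain ⟨Q, hQ, rfl⟩ := hq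
  refine ⟨Q.comap f, Ideal.IsPrime.comap f, ?_⟩
  ext x
  simp only [Ideal.mem_comap, Ideal.mem_iInf]
  constructor
  · intro h g
    have : f ((φA g) x) ∈ Q := by rw [hequiv g x]; exact h g
    simpa using this
  · intro h g
    have : f ((φA g) x) ∈ Q := by simpa using h g
    rw [hequiv g x] at this
    exact this
end

section
/- Let q, ζ ∈ ℂ with |q| > 1 and ζ a primitive t-th root of unity, and let k₀, …, k_{t−1} ∈ ℤ. Suppose there exists a nonzero rational function b ∈ ℂ(z) such that (−qz)^{k₀}·(−qζz)^{k₁}·⋯·(−qζ^{t−1}z)^{k_{t−1}} = b(qz)/b(z). Then k₀ + k₁ + ⋯ + k_{t−1} = 0. -/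
/-!
The integer degree `deg (num/denom) = deg num - deg denom` on `ℂ(z)` is additive on nonzero
elements, and the substitution `z ↦ qz` does not change it. Hence the left-hand side has degree
`k₀ + ⋯ + k_{t-1}`, while `b(qz)/b(z)` has degree `deg b - deg b = 0`.
-/

namespace RatFunc

open Polynomial

variable {K : Type*} [Field K]

theorem intDegree_pow (x : RatFunc K) (n : ℕ) : (x ^ n).intDegree = n * x.intDegree := by
  rcases eq_or_ne x 0 with rfl | hx
  · rcases n with _ | n <;> simp
  induction n with
  | zero => simp
  | succ n ih => rw [pow_succ, intDegree_mul (pow_ne_zero n hx) hx, ih]; push_cast; ring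

theorem intDegree_zpow (x : RatFunc K) (n : ℤ) : (x ^ n).intDegree = n * x.intDegree := by
  rcases n with n | n
  · simpa using intDegree_pow x n
  · rw [zpow_negSucc, intDegree_inv, intDegree_pow, Int.negSucc_eq]; push_cast; ring

theorem intDegree_prod {ι : Type*} (s : Finset ι) (f : ι → RatFunc K) (hf : ∀ i ∈ s, f i ≠ 0) :
    (∏ i ∈ s, f i).intDegree = ∑ i ∈ s, (f i).intDegree := by
  classical
  induction s using Finset.induction with
  | empty => simp
  | insert a s ha ih =>
    rw [Finset.forall_mem_insert] at hf
    rw [Finset.prod_insert ha, Finset.sum_insert ha,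
      intDegree_mul hf.1 (Finset.prod_ne_zero_iff.mpr hf.2), ih hf.2]

theorem algHom_algebraMap_of_map_X {σ : RatFunc K →ₐ[K] RatFunc K} {r : K[X]}
    (hσ : σ X = algebraMap K[X] (RatFunc K) r) (p : K[X]) :
    σ (algebraMap K[X] (RatFunc K) p) = algebraMap K[X] (RatFunc K) (p.comp r) := by
  rw [← aeval_X_left_eq_algebraMap, ← aeval_algHom_apply, hσ, aeval_algebraMap_apply,
    comp_eq_aeval]

theorem intDegree_algHom_of_map_X {σ : RatFunc K →ₐ[K] RatFunc K} {r : K[X]}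
    (hr : 0 < r.natDegree) (hσ : σ X = algebraMap K[X] (RatFunc K) r) (x : RatFunc K) :
    (σ x).intDegree = r.natDegree * x.intDegree := by
  have comp_ne_zero {p : K[X]} (hp : p ≠ 0) : algebraMap K[X] (RatFunc K) (p.comp r) ≠ 0 := by
    refine algebraMap_ne_zero fun h ↦ ?_
    rcases comp_eq_zero_iff.mp h with hp0 | ⟨-, hrC⟩
    · exact hp hp0
    · exact hr.ne' (hrC ▸ natDegree_C _)
  rcases eq_or_ne x 0 with rfl | hx
  · simp
  conv_lhs => rw [← num_div_denom x, map_div₀, algHom_algebraMap_of_map_X hσ,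
    algHom_algebraMap_of_map_X hσ, intDegree_div (comp_ne_zero (num_ne_zero hx))
      (comp_ne_zero x.denom_ne_zero), intDegree_polynomial, intDegree_polynomial,
    natDegree_comp, natDegree_comp]
  rw [intDegree]; push_cast; ring

theorem intDegree_C_mul_X_zpow {a : K} (ha : a ≠ 0) (n : ℤ) : ((C a * X) ^ n).intDegree = n := by
  rw [intDegree_zpow, intDegree_mul (by simpa using ha) X_ne_zero, intDegree_C, intDegree_X,
    zero_add, mul_one]

end RatFunc

open RatFunc in
theorem stmt11_general (q ζ : ℂ) (t : ℕ) (hζ : IsPrimitiveRoot ζ t)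
    (σ : RatFunc ℂ ≃ₐ[ℂ] RatFunc ℂ) (hσ : σ RatFunc.X = RatFunc.C q * RatFunc.X)
    (k : ℕ → ℤ) (b : RatFunc ℂ) (hb : b ≠ 0)
    (heq : ∏ i ∈ Finset.range t,
        (-(RatFunc.C q) * RatFunc.C ζ ^ i * RatFunc.X) ^ (k i) = σ b / b) :
    ∑ i ∈ Finset.range t, k i = 0 := by
  have hq : q ≠ 0 := by
    rintro rfl
    exact X_ne_zero (σ.injective (by simpa using hσ))
  have hσb : (σ b).intDegree = b.intDegree := by
    have hσX : σ.toAlgHom X =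
        algebraMap (Polynomial ℂ) (RatFunc ℂ) (Polynomial.C q * Polynomial.X) := by
      simpa [algebraMap_C, algebraMap_X] using hσ
    simpa [Polynomial.natDegree_C_mul_X q hq] using
      intDegree_algHom_of_map_X (by simp [Polynomial.natDegree_C_mul_X q hq]) hσX b
  have hc : ∀ i ∈ Finset.range t, -q * ζ ^ i ≠ 0 := fun i hi ↦
    mul_ne_zero (neg_ne_zero.mpr hq)
      (pow_ne_zero i (hζ.ne_zero (Finset.nonempty_range_iff.mp ⟨i, hi⟩)))
  have hfactor (i : ℕ) : -(C q) * C ζ ^ i * X = C (-q * ζ ^ i) * X := by simp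
  have hdeg := congrArg intDegree heq
  simp_rw [hfactor] at hdeg
  rwa [intDegree_prod _ _ fun i hi ↦
      zpow_ne_zero _ (mul_ne_zero ((map_ne_zero C).mpr (hc i hi)) X_ne_zero),
    Finset.sum_congr rfl fun i hi ↦ intDegree_C_mul_X_zpow (hc i hi) (k i),
    intDegree_div ((map_ne_zero σ).mpr hb) hb, hσb, sub_self] at hdeg

/-- If `(−qz)^{k₀}(−qζz)^{k₁}⋯(−qζ^{t−1}z)^{k_{t−1}} = b(qz)/b(z)` for a nonzero
`b ∈ ℂ(z)`, where `|q| > 1` and `ζ` is a primitive `t`-th root of unity, then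
`k₀ + ⋯ + k_{t−1} = 0`. -/
theorem stmt11 (q ζ : ℂ) (t : ℕ) (hq : 1 < ‖q‖) (hζ : IsPrimitiveRoot ζ t)
    (σ : RatFunc ℂ ≃ₐ[ℂ] RatFunc ℂ) (hσ : σ RatFunc.X = RatFunc.C q * RatFunc.X)
    (k : ℕ → ℤ) (b : RatFunc ℂ) (hb : b ≠ 0)
    (heq : ∏ i ∈ Finset.range t,
        (-(RatFunc.C q) * RatFunc.C ζ ^ i * RatFunc.X) ^ (k i) = σ b / b) :
    ∑ i ∈ Finset.range t, k i = 0 :=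
  stmt11_general q ζ t hζ σ hσ k b hb heq
end

section
/- Let D = M × ⋯ × M (k copies) be a product of copies of a field M, let F ⊆ D be a subfield, and H ⊆ Aut(D) a group of ring automorphisms with D^H = F. Let f = (1, 0, …, 0) and H₁ ⊆ H the stabilizer of f. Then f·F = (f·D)^{H₁}, where (f·D)^{H₁} is the set of H₁-fixed elements of the ideal f·D ≅ M. -/
open Finset

private def eIdem {M : Type*} [Field M] (k : ℕ) (i : Fin k) : Fin k → M :=
  fun m => if m = i then 1 else 0

private lemma eIdem_mul_self {M : Type*} [Field M] (k : ℕ) (i : Fin k) :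
    (eIdem k i : Fin k → M) * eIdem k i = eIdem k i := by
  funext m; by_cases h : m = i <;> simp [eIdem, h]

private lemma eIdem_ne_zero {M : Type*} [Field M] (k : ℕ) (i : Fin k) :
    (eIdem k i : Fin k → M) ≠ 0 := by
  intro h
  have := congrFun h i
  simp [eIdem] at this

private lemma eIdem_inj {M : Type*} [Field M] (k : ℕ) {i j : Fin k}
    (h : (eIdem k i : Fin k → M) = eIdem k j) : i = j := by
  by_contra hne
  have := congrFun h i
  simp [eIdem, hne] at this

private lemma eIdem_mul_ne {M : Type*} [Field M] (k : ℕ) {i j : Fin k} (h : i ≠ j) :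
    (eIdem k i : Fin k → M) * eIdem k j = 0 := by
  funext m
  by_cases hm : m = i
  · subst hm; simp [eIdem, h]
  · simp [eIdem, hm]

/-- Any ring automorphism of `Mᵏ` maps a standard idempotent to a standard idempotent. -/
private lemma exists_eIdem_image {M : Type*} [Field M] (k : ℕ)
    (g : RingAut (Fin k → M)) (i : Fin k) :
    ∃ j, g (eIdem k i) = eIdem k j := by
  have hidem : g (eIdem k i) * g (eIdem k i) = g (eIdem k i) := by
    rw [← map_mul, eIdem_mul_self]
  have hne : g (eIdem k i) ≠ 0 := by
    intro h
    exact eIdem_ne_zero k i (g.injective (by rw [h, map_zero]))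
  obtain ⟨j, hj⟩ : ∃ j, g (eIdem k i) j ≠ 0 := by
    by_contra h; push_neg at h; exact hne (funext h)
  have hj1 : g (eIdem k i) j = 1 := by
    have h1 := congrFun hidem j
    rw [Pi.mul_apply] at h1
    exact mul_left_cancel₀ hj (by rw [h1, mul_one])
  have hej : (eIdem k j : Fin k → M) * g (eIdem k i) = eIdem k j := by
    funext m
    by_cases hm : m = j
    · subst hm; simp [eIdem, hj1]
    · simp [eIdem, hm]
  set v := g.symm (eIdem k j) with hv
  have hvi : v * eIdem k i = v := by
    have h2 := congrArg g.symm hej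
    rw [map_mul, g.symm_apply_apply] at h2
    exact h2
  have hvv : v * v = v := by
    rw [hv, ← map_mul, eIdem_mul_self]
  have hvne : v ≠ 0 := by
    intro h
    exact eIdem_ne_zero k j (g.symm.injective (h.trans (map_zero g.symm).symm))
  have hvm : ∀ m, m ≠ i → v m = 0 := by
    intro m hm
    have h3 := congrFun hvi m
    rw [Pi.mul_apply] at h3
    simpa [eIdem, hm] using h3.symm
  have hvi1 : v i = 1 := by
    by_contra h
    have hvv' := congrFun hvv i
    rw [Pi.mul_apply] at hvv'
    have h0 : v i = 0 := by
      rcases eq_or_ne (v i) 0 with h' | h'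
      · exact h'
      · exact absurd (mul_left_cancel₀ h' (by rw [hvv', mul_one])) h
    apply hvne
    funext m
    rcases eq_or_ne m i with rfl | hm
    · exact h0
    · exact hvm m hm
  have hve : v = eIdem k i := by
    funext m
    rcases eq_or_ne m i with rfl | hm
    · simp [eIdem, hvi1]
    · simp [eIdem, hm, hvm m hm]
  refine ⟨j, ?_⟩
  rw [← hve, hv, g.apply_symm_apply]

/-- Let `D = Mᵏ` be a product of copies of a field `M`, `F ⊆ D` a subring which is a field,
and `H` a group of ring automorphisms of `D` with fixed ring exactly `F`. Let
`f = (1,0,…,0)` and `H₁ ⊆ H` the stabilizer of `f`. Then `f·F = (f·D)^{H₁}`. -/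
theorem stmt16 {M : Type*} [Field M] (k : ℕ) (F : Subring (Fin k → M))
    (hfield : ∀ x ∈ F, x ≠ 0 → ∃ y ∈ F, x * y = 1)
    (H : Subgroup (RingAut (Fin k → M)))
    (hfix : ∀ x : Fin k → M, (∀ h ∈ H, h x = x) ↔ x ∈ F)
    (f : Fin k → M) (hf : f = fun i : Fin k => if i.val = 0 then (1 : M) else (0 : M)) :
    (fun a => f * a) '' (F : Set (Fin k → M)) =
      {x : Fin k → M | f * x = x ∧ ∀ h ∈ H, h f = f → h x = x} := by
  classical
  rcases Nat.eq_zero_or_pos k with rfl | hk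
  · ext x
    simp only [Set.mem_image, Set.mem_setOf_eq]
    constructor
    · rintro -
      exact ⟨Subsingleton.elim _ _, fun h _ _ => Subsingleton.elim _ _⟩
    · rintro -
      exact ⟨0, F.zero_mem, Subsingleton.elim _ _⟩
  have hfe : f = eIdem k ⟨0, hk⟩ := by
    subst hf
    funext m
    simp [eIdem, Fin.ext_iff]
  set i0 : Fin k := ⟨0, hk⟩ with hi0
  ext x
  simp only [Set.mem_image, Set.mem_setOf_eq]
  constructor
  · rintro ⟨a, haF, rfl⟩
    refine ⟨?_, ?_⟩
    · show f * (f * a) = f * a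
      rw [← mul_assoc, hfe, eIdem_mul_self]
    · intro h hH hhf
      rw [map_mul, hhf, (hfix a).mpr haF h hH]
  · rintro ⟨hx1, hx2⟩
    set c : Fin k → (Fin k → M) := fun i =>
      if hi : ∃ h, h ∈ H ∧ h f = eIdem k i then hi.choose x else 0 with hc
    have W : ∀ (i : Fin k) (h : RingAut (Fin k → M)), h ∈ H → h f = eIdem k i →
        h x = c i := by
      intro i h hH hhf
      have hi : ∃ h', h' ∈ H ∧ h' f = eIdem k i := ⟨h, hH, hhf⟩
      rw [hc]
      simp only [dif_pos hi]
      obtain ⟨hgH, hgf⟩ := hi.choose_spec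
      set g := hi.choose with hg
      have hmem : g⁻¹ * h ∈ H := mul_mem (inv_mem hgH) hH
      have hgf' : (g⁻¹ * h) f = f := by
        show g⁻¹ (h f) = f
        rw [hhf, ← hgf]
        exact g.symm_apply_apply f
      have h2 : g⁻¹ (h x) = x := hx2 (g⁻¹ * h) hmem hgf'
      calc h x = g (g⁻¹ (h x)) := (g.apply_symm_apply _).symm
        _ = g x := by rw [h2]
    set a : Fin k → M := ∑ i, c i with ha
    have haF : a ∈ F := by
      rw [← hfix]
      intro h' hH'
      set σ : Fin k → Fin k := fun i => (exists_eIdem_image k h' i).choose with hσ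
      have hσspec : ∀ i, h' (eIdem k i) = eIdem k (σ i) :=
        fun i => (exists_eIdem_image k h' i).choose_spec
      have hσinj : Function.Injective σ := by
        intro i j hij
        apply eIdem_inj (M := M) k
        apply h'.injective
        rw [hσspec i, hσspec j, hij]
      have hσbij : Function.Bijective σ := Finite.injective_iff_bijective.mp hσinj
      have key : ∀ i, h' (c i) = c (σ i) := by
        intro i
        by_cases hi : ∃ h, h ∈ H ∧ h f = eIdem k i
        · obtain ⟨h, hH, hhf⟩ := hi
          have h1 : h x = c i := W i h hH hhf
          have h2 : (h' * h) f = eIdem k (σ i) := by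
            show h' (h f) = _
            rw [hhf, hσspec i]
          have h3 : (h' * h) x = c (σ i) := W _ _ (mul_mem hH' hH) h2
          calc h' (c i) = h' (h x) := by rw [h1]
            _ = (h' * h) x := rfl
            _ = c (σ i) := h3
        · have h0 : c i = 0 := by rw [hc]; exact dif_neg hi
          have h0' : ¬ ∃ h, h ∈ H ∧ h f = eIdem k (σ i) := by
            rintro ⟨h, hH, hhf⟩
            refine hi ⟨h'⁻¹ * h, mul_mem (inv_mem hH') hH, ?_⟩
            show h'⁻¹ (h f) = _
            rw [hhf, ← hσspec i]
            exact h'.symm_apply_apply _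
          have h0'' : c (σ i) = 0 := by rw [hc]; exact dif_neg h0'
          rw [h0, map_zero, h0'']
      rw [ha, map_sum]
      calc ∑ i, h' (c i) = ∑ i, c (σ i) := by simp only [key]
        _ = ∑ i, c i := Fintype.sum_bijective σ hσbij _ _ (fun i => rfl)
    refine ⟨a, haF, ?_⟩
    have hc0 : c i0 = x := by
      have h1 : (1 : RingAut (Fin k → M)) f = eIdem k i0 := hfe
      have h2 := W i0 1 H.one_mem h1
      exact h2.symm
    rw [ha, Finset.mul_sum, Finset.sum_eq_single i0]
    · rw [hc0, hx1]
    · intro i _ hne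
      by_cases hi : ∃ h, h ∈ H ∧ h f = eIdem k i
      · obtain ⟨h, hH, hhf⟩ := hi
        have h1 : h x = c i := W i h hH hhf
        have h2 : c i = eIdem k i * c i := by
          rw [← h1, ← hhf, ← map_mul, hx1]
        rw [h2, ← mul_assoc, hfe, eIdem_mul_ne k (Ne.symm hne), zero_mul]
      · rw [show c i = 0 from by rw [hc]; exact dif_neg hi, mul_zero]
    · intro h
      exact absurd (Finset.mem_univ i0) h
end
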